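/- arXiv:2504.02369 — 7 statements merged into one kernel-verified Lean document; each statement's English description precedes it below -/
import Mathlib

section
/- For every k-tuple (X₁,…,X_k) of elements of a lattice, there exists a monotone (non-decreasing) k-tuple (Y₁,…,Y_k) such that the multiset {Y₁,…,Y_k} can be obtained from {X₁,…,X_k} by repeatedly replacing a pair (a,b) with (a ⊓ b, a ⊔ b); in particular, when the lattice is a product of linear orders Fin r → α, the monotone tuple has the same multiset sum of coordinate values: ⨄_i values(Y_i) = ⨄_i values(X_i). -/
/-- One exchange step: replace a pair of entries `(a, b)` by `(a ⊓ b, a ⊔ b)`. -/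
def ExchangeStep {β : Type*} [Lattice β] {k : ℕ} (C C' : Fin k → β) : Prop :=
  ∃ i j : Fin k, i ≠ j ∧ C' i = C i ⊓ C j ∧ C' j = C i ⊔ C j ∧
    ∀ l : Fin k, l ≠ i → l ≠ j → C' l = C l

private lemma ofFn_sum_aux {α : Type*} {r : ℕ} (g : Fin r → α) :
    (↑(List.ofFn g) : Multiset α) = ∑ t : Fin r, {g t} := by
  induction r with
  | zero => simp
  | succ n ih => simp [List.ofFn_succ, Fin.sum_univ_succ, ih, Multiset.singleton_add, ← Multiset.cons_coe]

private lemma rearrange_le_aux {i j a b : ℕ} (hij : i ≤ j) (hba : b ≤ a) :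
    i * a + j * b ≤ i * b + j * a := by
  zify; nlinarith

private lemma rearrange_lt_aux {i j a b : ℕ} (hij : i < j) (hba : b < a) :
    i * a + j * b < i * b + j * a := by
  zify; nlinarith

private lemma sum_split_aux {M : Type*} [AddCommMonoid M] {k : ℕ} {i j : Fin k} (hij : i ≠ j)
    (g : Fin k → M) :
    ∑ l, g l = g i + g j + ∑ l ∈ (Finset.univ.erase i).erase j, g l := by
  rw [← Finset.add_sum_erase _ g (Finset.mem_univ i),
    ← Finset.add_sum_erase _ g (Finset.mem_erase.2 ⟨hij.symm, Finset.mem_univ j⟩), ← add_assoc]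

theorem exists_monotone_exchange {α : Type*} [LinearOrder α] {r k : ℕ}
    (X : Fin k → Fin r → α) :
    ∃ Y : Fin k → Fin r → α,
      Relation.ReflTransGen ExchangeStep X Y ∧
      (∀ i j : Fin k, i ≤ j → Y i ≤ Y j) ∧
      (∑ i : Fin k, (↑(List.ofFn (Y i)) : Multiset α)) =
        ∑ i : Fin k, (↑(List.ofFn (X i)) : Multiset α) := by
  classical
  set S : Finset α := Finset.image (fun p : Fin k × Fin r => X p.1 p.2) Finset.univ with hS
  set f : α → ℕ := fun x => (S.filter (· ≤ x)).card with hf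
  have fmono : ∀ {x y : α}, x ≤ y → f x ≤ f y := by
    intro x y hxy
    apply Finset.card_le_card
    intro z hz
    rw [Finset.mem_filter] at hz ⊢
    exact ⟨hz.1, hz.2.trans hxy⟩
  have fstrict : ∀ {x y : α}, x < y → y ∈ S → f x < f y := by
    intro x y hxy hy
    apply Finset.card_lt_card
    refine ⟨?_, fun hsub => ?_⟩
    · intro z hz
      rw [Finset.mem_filter] at hz ⊢
      exact ⟨hz.1, hz.2.trans hxy.le⟩
    · have := hsub (Finset.mem_filter.2 ⟨hy, le_refl y⟩)
      rw [Finset.mem_filter] at this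
      exact absurd this.2 (not_le.2 hxy)
  set Φ : (Fin k → Fin r → α) → ℕ := fun C => ∑ l : Fin k, ∑ t : Fin r, (l : ℕ) * f (C l t)
    with hΦ
  set B : ℕ := k * (r * (k * S.card)) with hBdef
  have hB : ∀ C : Fin k → Fin r → α, Φ C ≤ B := by
    intro C
    calc Φ C ≤ ∑ _l : Fin k, ∑ _t : Fin r, k * S.card := by
          apply Finset.sum_le_sum; intro l _; apply Finset.sum_le_sum; intro t _
          exact Nat.mul_le_mul l.isLt.le (Finset.card_filter_le _ _)
      _ = B := by simp [hBdef, Finset.sum_const, Finset.card_univ, mul_assoc]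
  have main : ∀ n : ℕ, ∀ C : Fin k → Fin r → α, (∀ l t, C l t ∈ S) → B - Φ C ≤ n →
      ∃ Y : Fin k → Fin r → α,
        Relation.ReflTransGen ExchangeStep C Y ∧
        (∀ i j : Fin k, i ≤ j → Y i ≤ Y j) ∧
        (∑ i : Fin k, (↑(List.ofFn (Y i)) : Multiset α)) =
          ∑ i : Fin k, (↑(List.ofFn (C i)) : Multiset α) := by
    intro n
    induction n using Nat.strong_induction_on with
    | _ n ih =>
      intro C hCS hn
      by_cases hmono : ∀ i j : Fin k, i ≤ j → C i ≤ C j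
      · exact ⟨C, Relation.ReflTransGen.refl, hmono, rfl⟩
      · push_neg at hmono
        obtain ⟨i, j, hij, hnle⟩ := hmono
        have hne : i ≠ j := by rintro rfl; exact hnle le_rfl
        have hlt : i < j := lt_of_le_of_ne hij hne
        have hltn : (i : ℕ) < (j : ℕ) := hlt
        set C' : Fin k → Fin r → α :=
          Function.update (Function.update C i (C i ⊓ C j)) j (C i ⊔ C j) with hC'
        have hC'i : C' i = C i ⊓ C j := by
          rw [hC', Function.update_of_ne hne, Function.update_self]
        have hC'j : C' j = C i ⊔ C j := by
          rw [hC', Function.update_self]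
        have hC'l : ∀ l, l ≠ i → l ≠ j → C' l = C l := by
          intro l h1 h2
          rw [hC', Function.update_of_ne h2, Function.update_of_ne h1]
        have hstep : ExchangeStep C C' := ⟨i, j, hne, hC'i, hC'j, hC'l⟩
        have hC'S : ∀ l t, C' l t ∈ S := by
          intro l t
          rcases eq_or_ne l i with rfl | h1
          · rw [hC'i, Pi.inf_apply]
            rcases le_total (C l t) (C j t) with h | h
            · rw [inf_eq_left.2 h]; exact hCS l t
            · rw [inf_eq_right.2 h]; exact hCS j t
          rcases eq_or_ne l j with rfl | h2
          · rw [hC'j, Pi.sup_apply]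
            rcases le_total (C i t) (C l t) with h | h
            · rw [sup_eq_right.2 h]; exact hCS l t
            · rw [sup_eq_left.2 h]; exact hCS i t
          · rw [hC'l l h1 h2]; exact hCS l t
        obtain ⟨t0, ht0⟩ : ∃ t, C j t < C i t := by
          rw [Pi.le_def] at hnle; push_neg at hnle
          obtain ⟨t, ht⟩ := hnle
          exact ⟨t, ht⟩
        have keyle : ∀ t : Fin r,
            (i : ℕ) * f (C i t) + (j : ℕ) * f (C j t) ≤
              (i : ℕ) * f (C' i t) + (j : ℕ) * f (C' j t) := by
          intro t
          rw [hC'i, hC'j, Pi.inf_apply, Pi.sup_apply]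
          rcases le_total (C i t) (C j t) with h | h
          · rw [inf_eq_left.2 h, sup_eq_right.2 h]
          · rw [inf_eq_right.2 h, sup_eq_left.2 h]
            exact rearrange_le_aux hltn.le (fmono h)
        have keylt :
            (i : ℕ) * f (C i t0) + (j : ℕ) * f (C j t0) <
              (i : ℕ) * f (C' i t0) + (j : ℕ) * f (C' j t0) := by
          rw [hC'i, hC'j, Pi.inf_apply, Pi.sup_apply,
            inf_eq_right.2 ht0.le, sup_eq_left.2 ht0.le]
          exact rearrange_lt_aux hltn (fstrict ht0 (hCS i t0))
        have hΦlt : Φ C < Φ C' := by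
          rw [hΦ]
          dsimp only
          rw [sum_split_aux hne (fun l => ∑ t : Fin r, (l : ℕ) * f (C l t)),
            sum_split_aux hne (fun l => ∑ t : Fin r, (l : ℕ) * f (C' l t))]
          have hrest : ∑ l ∈ (Finset.univ.erase i).erase j, ∑ t : Fin r, (l : ℕ) * f (C l t) =
              ∑ l ∈ (Finset.univ.erase i).erase j, ∑ t : Fin r, (l : ℕ) * f (C' l t) := by
            apply Finset.sum_congr rfl
            intro l hl
            rw [Finset.mem_erase, Finset.mem_erase] at hl
            rw [hC'l l hl.2.1 hl.1]
          rw [← hrest]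
          apply Nat.add_lt_add_right
          rw [← Finset.sum_add_distrib, ← Finset.sum_add_distrib]
          exact Finset.sum_lt_sum (fun t _ => keyle t) ⟨t0, Finset.mem_univ t0, keylt⟩
        have hmult : (∑ l : Fin k, (↑(List.ofFn (C' l)) : Multiset α)) =
            ∑ l : Fin k, (↑(List.ofFn (C l)) : Multiset α) := by
          rw [sum_split_aux hne (fun l => (↑(List.ofFn (C' l)) : Multiset α)),
            sum_split_aux hne (fun l => (↑(List.ofFn (C l)) : Multiset α))]
          have hrest : ∑ l ∈ (Finset.univ.erase i).erase j, (↑(List.ofFn (C' l)) : Multiset α) =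
              ∑ l ∈ (Finset.univ.erase i).erase j, (↑(List.ofFn (C l)) : Multiset α) := by
            apply Finset.sum_congr rfl
            intro l hl
            rw [Finset.mem_erase, Finset.mem_erase] at hl
            rw [hC'l l hl.2.1 hl.1]
          rw [hrest]
          congr 1
          rw [hC'i, hC'j, ofFn_sum_aux, ofFn_sum_aux, ofFn_sum_aux, ofFn_sum_aux,
            ← Finset.sum_add_distrib, ← Finset.sum_add_distrib]
          apply Finset.sum_congr rfl
          intro t _
          rw [Pi.inf_apply, Pi.sup_apply]
          rcases le_total (C i t) (C j t) with h | h
          · rw [inf_eq_left.2 h, sup_eq_right.2 h]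
          · rw [inf_eq_right.2 h, sup_eq_left.2 h, add_comm]
        have hdec : B - Φ C' < n := by
          have h1 := hB C'
          omega
        obtain ⟨Y, hR, hm, hs⟩ := ih (B - Φ C') hdec C' hC'S le_rfl
        exact ⟨Y, Relation.ReflTransGen.head hstep hR, hm, hs.trans hmult⟩
  have hXS : ∀ l t, X l t ∈ S := by
    intro l t
    rw [hS]
    exact Finset.mem_image.2 ⟨(l, t), Finset.mem_univ _, rfl⟩
  exact main (B - Φ X) X hXS le_rfl
end

section
/- Let α be a linear order, k a natural number, and let C₁, C₂ : Fin k → α be monotone sequences. For any e ∈ α, with μ_e as the count of indices mapping to e, we have max(μ_e(C₁ ⊔ C₂), μ_e(C₁ ⊓ C₂)) ≤ max(μ_e(C₁), μ_e(C₂)). -/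
/-!
For monotone `C` the index sets `{i | C i ≤ e}` and `{i | C i < e}` are initial segments, so
for two monotone sequences these sets are nested. Since `C₁ ⊔ C₂ ≤ e` cuts out the intersection
and `C₁ ⊓ C₂ ≤ e` the union of these nested segments (likewise for `< e`), their sizes are the
`min` and the `max` of the sizes for `C₁` and `C₂`. As `μ_e(C) = #{C ≤ e} - #{C < e}`, the claim
becomes an inequality between natural numbers.
-/

open Finset

section

variable {ι : Type*} [LinearOrder ι] {p q : ι → Prop} [DecidablePred p] [DecidablePred q]

theorem filter_subset_or_subset_of_antitone (s : Finset ι) (hp : Antitone p) (hq : Antitone q) :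
    s.filter p ⊆ s.filter q ∨ s.filter q ⊆ s.filter p :=
  ((isLowerSet_setOfPred.2 hp).total (isLowerSet_setOfPred.2 hq)).imp
    (fun h => monotone_filter_right s fun i _ => @h i)
    (fun h => monotone_filter_right s fun i _ => @h i)

theorem card_filter_and_of_antitone (s : Finset ι) (hp : Antitone p) (hq : Antitone q) :
    #(s.filter fun i => p i ∧ q i) = min #(s.filter p) #(s.filter q) := by
  rw [filter_and]
  rcases filter_subset_or_subset_of_antitone s hp hq with h | h
  · rw [inter_eq_left.2 h, min_eq_left (card_le_card h)]
  · rw [inter_eq_right.2 h, min_eq_right (card_le_card h)]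

theorem card_filter_or_of_antitone [DecidableEq ι] (s : Finset ι) (hp : Antitone p)
    (hq : Antitone q) :
    #(s.filter fun i => p i ∨ q i) = max #(s.filter p) #(s.filter q) := by
  rw [filter_or]
  rcases filter_subset_or_subset_of_antitone s hp hq with h | h
  · rw [union_eq_right.2 h, max_eq_right (card_le_card h)]
  · rw [union_eq_left.2 h, max_eq_left (card_le_card h)]

end

theorem card_filter_eq_add_card_filter_lt {ι α : Type*} [DecidableEq ι] [LinearOrder α]
    (s : Finset ι) (C : ι → α) (e : α) :
    #(s.filter fun i => C i = e) + #(s.filter fun i => C i < e) = #(s.filter fun i => C i ≤ e) := by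
  rw [← card_union_of_disjoint (disjoint_filter.2 fun _ _ h => h.not_lt), ← filter_or]
  simp only [← le_iff_eq_or_lt]

theorem multiplicity_max_le {α : Type*} [LinearOrder α] {k : ℕ}
    (C₁ C₂ : Fin k → α) (h₁ : Monotone C₁) (h₂ : Monotone C₂) (e : α) :
    max (Finset.univ.filter fun i => (C₁ ⊔ C₂) i = e).card
        (Finset.univ.filter fun i => (C₁ ⊓ C₂) i = e).card ≤
    max (Finset.univ.filter fun i => C₁ i = e).card
        (Finset.univ.filter fun i => C₂ i = e).card := by
  have sup_le := card_filter_and_of_antitone (p := fun i => C₁ i ≤ e) (q := fun i => C₂ i ≤ e)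
    univ (antitone_le.comp_monotone h₁) (antitone_le.comp_monotone h₂)
  have sup_lt := card_filter_and_of_antitone (p := fun i => C₁ i < e) (q := fun i => C₂ i < e)
    univ (antitone_lt.comp_monotone h₁) (antitone_lt.comp_monotone h₂)
  have inf_le := card_filter_or_of_antitone (p := fun i => C₁ i ≤ e) (q := fun i => C₂ i ≤ e)
    univ (antitone_le.comp_monotone h₁) (antitone_le.comp_monotone h₂)
  have inf_lt := card_filter_or_of_antitone (p := fun i => C₁ i < e) (q := fun i => C₂ i < e)
    univ (antitone_lt.comp_monotone h₁) (antitone_lt.comp_monotone h₂)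
  have split₁ := card_filter_eq_add_card_filter_lt univ C₁ e
  have split₂ := card_filter_eq_add_card_filter_lt univ C₂ e
  have split_sup := card_filter_eq_add_card_filter_lt univ (C₁ ⊔ C₂) e
  have split_inf := card_filter_eq_add_card_filter_lt univ (C₁ ⊓ C₂) e
  simp only [Pi.sup_apply, Pi.inf_apply, sup_le_iff, sup_lt_iff, inf_le_iff, inf_lt_iff]
    at split_sup split_inf ⊢
  omega
end

section
/- Let α be a linear order and let C₁, C₂ : Fin k → α be monotone sequences. Define B_e(C) = C(μ_e(C), 2), the binomial coefficient of the multiplicity of e choose 2. Then B_e(C₁ ⊔ C₂) + B_e(C₁ ⊓ C₂) ≤ B_e(C₁) + B_e(C₂) for every e ∈ α; i.e., B_e is submodular on the lattice of monotone sequences. -/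
/-!
Pointwise, `{(C₁ ⊔ C₂) i, (C₁ ⊓ C₂) i} = {C₁ i, C₂ i}`, so the multiplicities of `e` in `C₁ ⊔ C₂`
and `C₁ ⊓ C₂` have the same sum as those in `C₁` and `C₂`. Monotonicity forces the fiber of
`C₁ ⊔ C₂` over `e` (and dually that of `C₁ ⊓ C₂`) into the fiber of `C₁` or of `C₂`: points
`i`, `j` of it with `C₁ i ≠ e` and `C₂ j ≠ e` would give `C₁ i < C₁ j` and `C₂ j < C₂ i`.
Hence both multiplicities on the left are at most the larger one on the right, and convexity
of `n ↦ n.choose 2` gives the inequality.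
-/

open Finset

lemma Nat.choose_two_mul_two_add_self (n : ℕ) : n.choose 2 * 2 + n = n * n := by
  induction n with
  | zero => rfl
  | succ n ih =>
    rw [Nat.choose_succ_succ, Nat.choose_one_right]
    nlinarith [ih]

lemma Nat.choose_two_add_choose_two_le {s t a b : ℕ} (hsum : s + t = a + b)
    (hs : s ≤ max a b) (ht : t ≤ max a b) :
    s.choose 2 + t.choose 2 ≤ a.choose 2 + b.choose 2 := by
  have hsq : s * s + t * t ≤ a * a + b * b := by
    rcases le_total a b with h | h
    · rw [max_eq_right h] at hs ht
      nlinarith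
    · rw [max_eq_left h] at hs ht
      nlinarith
  nlinarith [s.choose_two_mul_two_add_self, t.choose_two_mul_two_add_self,
    a.choose_two_mul_two_add_self, b.choose_two_mul_two_add_self]

section Fibers

variable {ι α : Type*} [Fintype ι] [LinearOrder α]

lemma card_fiber_sup_add_card_fiber_inf (f g : ι → α) (e : α) :
    #{i | (f ⊔ g) i = e} + #{i | (f ⊓ g) i = e} = #{i | f i = e} + #{i | g i = e} := by
  simp only [card_filter, ← sum_add_distrib]
  refine sum_congr rfl fun i _ => ?_
  rcases le_total (f i) (g i) with h | h
  · rw [Pi.sup_apply, Pi.inf_apply, sup_eq_right.2 h, inf_eq_left.2 h, add_comm]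
  · rw [Pi.sup_apply, Pi.inf_apply, sup_eq_left.2 h, inf_eq_right.2 h]

lemma lt_and_eq_of_sup_eq_of_ne {a b e : α} (h : a ⊔ b = e) (ha : a ≠ e) : a < e ∧ b = e :=
  ⟨(h ▸ le_sup_left).lt_of_ne ha,
    ((max_choice a b).resolve_left fun h' => ha (h' ▸ h)).symm.trans h⟩

variable [LinearOrder ι] {f g : ι → α}

lemma card_fiber_sup_le_max (hf : Monotone f) (hg : Monotone g) (e : α) :
    #{i | (f ⊔ g) i = e} ≤ max #{i | f i = e} #{i | g i = e} := by
  suffices ({i | (f ⊔ g) i = e} : Finset ι) ⊆ ({i | f i = e} : Finset ι) ∨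
      ({i | (f ⊔ g) i = e} : Finset ι) ⊆ ({i | g i = e} : Finset ι) by
    rcases this with h | h
    exacts [le_max_of_le_left (card_le_card h), le_max_of_le_right (card_le_card h)]
  by_contra! h
  obtain ⟨⟨i, hi, hfi⟩, ⟨j, hj, hgj⟩⟩ := h.imp not_subset.1 not_subset.1
  simp only [mem_filter, mem_univ, true_and, Pi.sup_apply] at hi hfi hj hgj
  obtain ⟨hfi, hgi⟩ := lt_and_eq_of_sup_eq_of_ne hi hfi
  obtain ⟨hgj, hfj⟩ := lt_and_eq_of_sup_eq_of_ne (sup_comm (f j) (g j) ▸ hj) hgj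
  exact (hf.reflect_lt (hfi.trans_eq hfj.symm)).asymm (hg.reflect_lt (hgj.trans_eq hgi.symm))

lemma card_fiber_inf_le_max (hf : Monotone f) (hg : Monotone g) (e : α) :
    #{i | (f ⊓ g) i = e} ≤ max #{i | f i = e} #{i | g i = e} :=
  card_fiber_sup_le_max (ι := ιᵒᵈ) (α := αᵒᵈ) hf.dual hg.dual e

end Fibers

theorem binom_multiplicity_submodular {α : Type*} [LinearOrder α] {k : ℕ}
    (C₁ C₂ : Fin k → α) (h₁ : Monotone C₁) (h₂ : Monotone C₂) (e : α) :
    Nat.choose (Finset.univ.filter fun i => (C₁ ⊔ C₂) i = e).card 2 +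
      Nat.choose (Finset.univ.filter fun i => (C₁ ⊓ C₂) i = e).card 2 ≤
    Nat.choose (Finset.univ.filter fun i => C₁ i = e).card 2 +
      Nat.choose (Finset.univ.filter fun i => C₂ i = e).card 2 :=
  Nat.choose_two_add_choose_two_le (card_fiber_sup_add_card_fiber_inf C₁ C₂ e)
    (card_fiber_sup_le_max h₁ h₂ e) (card_fiber_inf_le_max h₁ h₂ e)
end

section
/- Let α be a linear order and let C₁, C₂ : Fin k → α be monotone sequences. The sets of values (images) satisfy: the image of C₁ ⊔ C₂ together with the image of C₁ ⊓ C₂ has total cardinality at least that of the images of C₁ and C₂, i.e., |Im(C₁ ⊔ C₂)| + |Im(C₁ ⊓ C₂)| ≥ |Im(C₁)| + |Im(C₂)|. -/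
/-!
Every value of `C₁` or `C₂` is a value of `C₁ ⊔ C₂` or of `C₁ ⊓ C₂`, so the union of the images
of `C₁, C₂` lies in the union of the images of `C₁ ⊔ C₂, C₁ ⊓ C₂`. By monotonicity the same holds
for intersections: if `C₁ i = C₂ j = x` with `i ≤ j`, then `x` is attained by `C₁ ⊔ C₂` at `i`
and by `C₁ ⊓ C₂` at `j`. Inclusion–exclusion turns the two inclusions into the inequality.
-/

open Finset

section

variable {ι α : Type*} [LinearOrder α]

theorem image_union_subset_image_sup_union_image_inf [DecidableEq α] (s : Finset ι)
    (f g : ι → α) : s.image f ∪ s.image g ⊆ s.image (f ⊔ g) ∪ s.image (f ⊓ g) := by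
  have key : ∀ f g : ι → α, s.image f ⊆ s.image (f ⊔ g) ∪ s.image (f ⊓ g) := by
    intro f g x hx
    obtain ⟨i, hi, rfl⟩ := mem_image.1 hx
    rcases le_total (g i) (f i) with h | h
    · exact mem_union_left _ (mem_image.2 ⟨i, hi, sup_eq_left.2 h⟩)
    · exact mem_union_right _ (mem_image.2 ⟨i, hi, inf_eq_left.2 h⟩)
  refine union_subset (key f g) ?_
  simpa only [sup_comm f g, inf_comm f g] using key g f

theorem Monotone.sup_apply_eq_and_inf_apply_eq [Preorder ι] {f g : ι → α} (hf : Monotone f)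
    (hg : Monotone g) {i j : ι} (hij : i ≤ j) (h : f i = g j) :
    (f ⊔ g) i = f i ∧ (f ⊓ g) j = g j :=
  ⟨sup_eq_left.2 ((hg hij).trans h.ge), inf_eq_right.2 (h.ge.trans (hf hij))⟩

theorem Monotone.image_inter_subset_image_sup_inter_image_inf [LinearOrder ι] [DecidableEq α]
    (s : Finset ι) {f g : ι → α} (hf : Monotone f) (hg : Monotone g) :
    s.image f ∩ s.image g ⊆ s.image (f ⊔ g) ∩ s.image (f ⊓ g) := by
  intro x hx
  obtain ⟨⟨i, hi, rfl⟩, ⟨j, hj, hji⟩⟩ := by simpa only [mem_inter, mem_image] using hx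
  rcases le_total i j with hij | hij
  · obtain ⟨hsup, hinf⟩ := hf.sup_apply_eq_and_inf_apply_eq hg hij hji.symm
    exact mem_inter.2 ⟨mem_image.2 ⟨i, hi, hsup⟩, mem_image.2 ⟨j, hj, hinf.trans hji⟩⟩
  · obtain ⟨hsup, hinf⟩ := hg.sup_apply_eq_and_inf_apply_eq hf hij hji
    rw [sup_comm] at hsup
    rw [inf_comm] at hinf
    exact mem_inter.2 ⟨mem_image.2 ⟨j, hj, hsup.trans hji⟩, mem_image.2 ⟨i, hi, hinf⟩⟩

end

theorem image_card_supermodular {α : Type*} [LinearOrder α] {k : ℕ}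
    (C₁ C₂ : Fin k → α) (h₁ : Monotone C₁) (h₂ : Monotone C₂) :
    (Finset.univ.image (C₁ ⊔ C₂)).card + (Finset.univ.image (C₁ ⊓ C₂)).card ≥
      (Finset.univ.image C₁).card + (Finset.univ.image C₂).card := by
  rw [ge_iff_le, ← card_union_add_card_inter (univ.image C₁),
    ← card_union_add_card_inter (univ.image (C₁ ⊔ C₂))]
  exact add_le_add
    (card_le_card (image_union_subset_image_sup_union_image_inf univ C₁ C₂))
    (card_le_card (h₁.image_inter_subset_image_sup_inter_image_inf univ h₂))
end

section
/- Let L be a lattice with bottom element 0 and let k ≥ 1. Every join-irreducible element of the lattice L* of monotone k-tuples of L (with componentwise order) has the form (0,…,0,p,…,p) for some join-irreducible p of L and some position i: i.e., any monotone tuple T containing two distinct non-bottom values a ≺ b can be written as the join of two monotone tuples each strictly smaller than T, and any tuple of the form (0,…,0,p,…,p) with p join-reducible is join-reducible in L*. -/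
/-!
Let `T` be sup-irreducible among monotone tuples and `T i ≠ ⊥`. Then `T` is the join of
`T ⊓ T i` with the tuple obtained from `T` by replacing every entry up to position `i` by `⊥`;
both are monotone, and the second misses `T i`, so `T = T ⊓ T i`, i.e. every later entry equals
`T i`. Hence `T` is `⊥` before its first non-bottom position `i` and constant `p` from there on.
Since `c ↦ (⊥, …, ⊥, c, …, c)` is an injective sup-homomorphism, `p` is sup-irreducible in `α`.
-/

section

open OrderHom

variable {ι α : Type*} [Lattice α] [OrderBot α]

section Preorder

variable [Preorder ι]

theorem SupIrred.apply_eq_of_le {f : ι →o α} (hf : SupIrred f) {i j : ι} (hij : i ≤ j)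
    (hi : f i ≠ ⊥) : f i = f j := by
  classical
  obtain ⟨g, hg_le, hg_not_le⟩ : ∃ g : ι →o α, (∀ m ≤ i, g m = ⊥) ∧ ∀ m, ¬m ≤ i → g m = f m :=
    ⟨⟨fun m => if m ≤ i then ⊥ else f m, fun x y hxy => by
      by_cases hy : y ≤ i
      · simp [hxy.trans hy, hy]
      · dsimp only
        split_ifs
        exacts [bot_le, f.mono hxy]⟩, fun m hm => if_pos hm, fun m hm => if_neg hm⟩
  have hsplit : f ⊓ const ι (f i) ⊔ g = f := by
    ext m
    by_cases hm : m ≤ i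
    · simp [hg_le m hm, f.mono hm]
    · simp [hg_not_le m hm]
  rcases hf.2 hsplit with hinf | hg
  · refine le_antisymm (f.mono hij) ?_
    calc f j = (f ⊓ const ι (f i)) j := by rw [hinf]
      _ ≤ f i := inf_le_right
  · exact (hi (by rw [← hg, hg_le i le_rfl])).elim

variable [DecidableLT ι]

namespace OrderHom

def step (i : ι) (c : α) : ι →o α where
  toFun j := if j < i then ⊥ else c
  monotone' x y hxy := by
    by_cases hy : y < i
    · simp [hxy.trans_lt hy, hy]
    · dsimp only
      split_ifs <;> simp

@[simp]
theorem step_apply (i j : ι) (c : α) : step i c j = if j < i then ⊥ else c := rfl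

theorem step_bot (i : ι) : step i (⊥ : α) = ⊥ := by
  ext j
  simp

theorem step_sup (i : ι) (a b : α) : step i (a ⊔ b) = step i a ⊔ step i b := by
  ext j
  by_cases hj : j < i <;> simp [hj]

theorem step_injective (i : ι) : Function.Injective (step i : α → ι →o α) := fun a b h => by
  simpa using DFunLike.congr_fun h i

end OrderHom

theorem SupIrred.of_step {i : ι} {p : α} (h : SupIrred (step i p)) : SupIrred p :=
  ⟨fun hp => h.1 (by rw [isMin_iff_eq_bot.1 hp, step_bot]; exact isMin_bot),
    fun a b hab => (h.2 (by rw [← step_sup, hab])).imp (step_injective i ·) (step_injective i ·)⟩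

end Preorder

theorem SupIrred.exists_eq_step [LinearOrder ι] [WellFoundedLT ι] {f : ι →o α}
    (hf : SupIrred f) : ∃ i, f = step i (f i) := by
  obtain ⟨j, hj⟩ : ∃ j, f j ≠ ⊥ := by
    by_contra! h
    exact hf.ne_bot (ext _ _ (funext h))
  obtain ⟨i, hi, hmin⟩ := wellFounded_lt.has_min {j | f j ≠ ⊥} ⟨j, hj⟩
  refine ⟨i, ext _ _ (funext fun j => ?_)⟩
  by_cases hji : j < i
  · simpa [hji] using not_not.1 fun hj => hmin j hj hji
  · simpa [hji] using (hf.apply_eq_of_le (not_lt.1 hji) hi).symm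

end

theorem joinIrreducible_tuple_form_general {α : Type*} [Lattice α] [OrderBot α]
    {k : ℕ} (T : Fin k → α) (hT : Monotone T)
    (hne : T ≠ fun _ => ⊥)
    (hirr : ∀ A B : Fin k → α, Monotone A → Monotone B → T = A ⊔ B →
      T = A ∨ T = B) :
    ∃ (p : α) (i : Fin k),
      (p ≠ ⊥ ∧ ∀ a b : α, p = a ⊔ b → p = a ∨ p = b) ∧
      T = fun j : Fin k => if (j : ℕ) < (i : ℕ) then (⊥ : α) else p := by
  let F : Fin k →o α := ⟨T, hT⟩
  have hF : SupIrred F :=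
    ⟨fun hmin => hne (congrArg DFunLike.coe (isMin_iff_eq_bot.1 hmin)),
      fun A B hAB => (hirr A B A.mono B.mono (congrArg DFunLike.coe hAB).symm).imp
        (fun h => (OrderHom.ext _ _ h).symm) (fun h => (OrderHom.ext _ _ h).symm)⟩
  obtain ⟨i, hi⟩ := hF.exists_eq_step
  have hp : SupIrred (T i) := (hi ▸ hF).of_step
  exact ⟨T i, i, ⟨hp.ne_bot, fun a b hab => (hp.2 hab.symm).imp Eq.symm Eq.symm⟩,
    congrArg DFunLike.coe hi⟩

theorem joinIrreducible_tuple_form {α : Type*} [Lattice α] [OrderBot α]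
    {k : ℕ} (hk : 1 ≤ k) (T : Fin k → α) (hT : Monotone T)
    (hne : T ≠ fun _ => ⊥)
    (hirr : ∀ A B : Fin k → α, Monotone A → Monotone B → T = A ⊔ B →
      T = A ∨ T = B) :
    ∃ (p : α) (i : Fin k),
      (p ≠ ⊥ ∧ ∀ a b : α, p = a ⊔ b → p = a ∨ p = b) ∧
      T = fun j : Fin k => if (j : ℕ) < (i : ℕ) then (⊥ : α) else p :=
  joinIrreducible_tuple_form_general T hT hne hirr
end

section
/- Let Γ be the set of stable matchings of a stable marriage instance with men A and women B and strict preference lists. If X and Y are stable matchings, then the matchings X ⊔ Y (matching each man a to his more preferred of his partners in X and Y) and X ⊓ Y (matching each man to his less preferred partner) are both well-defined perfect matchings and are stable. -/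
/-!
Two men cannot both take the same woman `b` as their better partner: each strictly prefers `b`
to his other partner, so stability of `X` and of `Y` force `b` to rank each of them above the
other. Hence the join is injective, i.e. a perfect matching. At every man the meet takes exactly
the partner the join leaves, so as multisets their images add up to the images of `X` and `Y`,
and the meet is a perfect matching as well.

A pair blocking the join blocks `X` or `Y` outright. For the meet, every woman weakly prefers her
meet-partner to her `X`- and `Y`-partners: if her `X`-partner `p` is not her meet-partner, then
`p` strictly prefers her to `Y p`, and stability of `Y` settles it. So a pair blocking the meet
blocks `X` or `Y` too.
-/

/-- A stable-marriage instance on `K_{n,n}`: each man (resp. woman) ranks the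
women (resp. men) by a strict linear order given by an injective rank function
(lower rank = more preferred). -/
structure SMInstance (n : ℕ) where
  mRank : Fin n → Fin n → Fin n
  wRank : Fin n → Fin n → Fin n
  mInj : ∀ a, Function.Injective (mRank a)
  wInj : ∀ b, Function.Injective (wRank b)

/-- A perfect matching (bijection men → women) is stable if there is no
blocking pair. -/
def SMInstance.IsStable {n : ℕ} (I : SMInstance n) (M : Fin n ≃ Fin n) : Prop :=
  ¬ ∃ a b : Fin n, M a ≠ b ∧ I.mRank a b < I.mRank a (M a) ∧
    I.wRank b a < I.wRank b (M.symm b)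

theorem Function.bijective_of_forall_pair_eq {α β : Type*} [Fintype α] [Fintype β]
    {X Y J : α ≃ β} {K : α → β} (h : ∀ a, ({J a, K a} : Multiset β) = {X a, Y a}) :
    K.Bijective := by
  have hmap : Finset.univ.val.map K = Finset.univ.val := by
    have hbind := congrArg (Finset.univ.val.bind ·) (funext h)
    simp only [Multiset.insert_eq_cons, ← Multiset.singleton_add, Multiset.bind_add,
      Multiset.bind_singleton, Multiset.map_univ_val_equiv] at hbind
    exact add_left_cancel hbind
  refine ⟨fun a a' haa' => ?_, fun b => ?_⟩
  · have hnodup : (Finset.univ.val.map K).Nodup := hmap ▸ Finset.univ.nodup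
    exact (Multiset.nodup_map_iff_inj_on Finset.univ.nodup).1 hnodup a
      (Finset.mem_univ a) a' (Finset.mem_univ a') haa'
  · have hb : b ∈ Finset.univ.val.map K := hmap ▸ Finset.mem_univ b
    obtain ⟨a, -, ha⟩ := Multiset.mem_map.1 hb
    exact ⟨a, ha⟩

theorem Equiv.symm_apply_eq_or {α β : Type*} {M X Y : α ≃ β}
    (h : ∀ a, M a = X a ∨ M a = Y a) (b : β) :
    M.symm b = X.symm b ∨ M.symm b = Y.symm b := by
  simp only [Equiv.eq_symm_apply]
  simpa only [M.apply_symm_apply, eq_comm] using h (M.symm b)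

namespace SMInstance

variable {n : ℕ} (I : SMInstance n)

def join (X Y : Fin n ≃ Fin n) (a : Fin n) : Fin n :=
  if I.mRank a (X a) ≤ I.mRank a (Y a) then X a else Y a

def meet (X Y : Fin n ≃ Fin n) (a : Fin n) : Fin n :=
  if I.mRank a (X a) ≤ I.mRank a (Y a) then Y a else X a

variable {I} {X Y : Fin n ≃ Fin n}

theorem mRank_lt_of_le_of_ne {a b c : Fin n} (h : I.mRank a b ≤ I.mRank a c) (hne : b ≠ c) :
    I.mRank a b < I.mRank a c :=
  h.lt_of_ne fun e => hne (I.mInj a e)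

theorem isStable_iff {M : Fin n ≃ Fin n} :
    I.IsStable M ↔
      ∀ a b, I.mRank a b < I.mRank a (M a) → I.wRank b (M.symm b) ≤ I.wRank b a := by
  simp only [IsStable, not_exists, not_and, not_lt]
  refine ⟨fun h a b hab => h a b (fun e => ?_) hab, fun h a b _ => h a b⟩
  exact (e ▸ hab).false

theorem join_eq_or (a : Fin n) : I.join X Y a = X a ∨ I.join X Y a = Y a := by
  unfold join; split_ifs <;> simp

theorem meet_eq_or (a : Fin n) : I.meet X Y a = X a ∨ I.meet X Y a = Y a := by
  unfold meet; split_ifs <;> simp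

theorem mRank_join_le_left (a : Fin n) : I.mRank a (I.join X Y a) ≤ I.mRank a (X a) := by
  unfold join; split_ifs with h
  exacts [le_rfl, (not_le.1 h).le]

theorem mRank_join_le_right (a : Fin n) : I.mRank a (I.join X Y a) ≤ I.mRank a (Y a) := by
  unfold join; split_ifs with h
  exacts [h, le_rfl]

theorem mRank_le_meet_left (a : Fin n) : I.mRank a (X a) ≤ I.mRank a (I.meet X Y a) := by
  unfold meet; split_ifs with h
  exacts [h, le_rfl]

theorem meet_comm : I.meet X Y = I.meet Y X := by
  funext a
  unfold meet; split_ifs with h h' h'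
  · exact I.mInj a (le_antisymm h' h)
  · rfl
  · rfl
  · exact absurd (le_of_not_ge h) h'

theorem join_meet_pair (a : Fin n) :
    ({I.join X Y a, I.meet X Y a} : Multiset (Fin n)) = {X a, Y a} := by
  unfold join meet; split_ifs
  exacts [rfl, Multiset.pair_comm _ _]

theorem IsStable.eq_of_apply_eq_of_mRank_le (hX : I.IsStable X) (hY : I.IsStable Y)
    {a a' : Fin n} (hb : X a = Y a') (ha : I.mRank a (X a) ≤ I.mRank a (Y a))
    (ha' : I.mRank a' (Y a') ≤ I.mRank a' (X a')) : a = a' := by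
  by_contra hne
  have hlt : I.mRank a (X a) < I.mRank a (Y a) :=
    mRank_lt_of_le_of_ne ha fun e => hne (Y.injective (e ▸ hb))
  have hlt' : I.mRank a' (Y a') < I.mRank a' (X a') :=
    mRank_lt_of_le_of_ne ha' fun e => hne (X.injective (hb.trans e))
  have h₁ := isStable_iff.1 hY a (X a) hlt
  have h₂ := isStable_iff.1 hX a' (Y a') hlt'
  rw [hb, Y.symm_apply_apply] at h₁
  rw [← hb, X.symm_apply_apply] at h₂
  exact hne (I.wInj _ (le_antisymm (hb ▸ h₂) h₁))

theorem join_bijective (hX : I.IsStable X) (hY : I.IsStable Y) : (I.join X Y).Bijective := by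
  refine Finite.injective_iff_bijective.1 fun a a' h => ?_
  rcases join_eq_or (I := I) (X := X) (Y := Y) a with ha | ha <;>
    rcases join_eq_or (I := I) (X := X) (Y := Y) a' with ha' | ha'
  · exact X.injective (ha ▸ ha' ▸ h)
  · exact hX.eq_of_apply_eq_of_mRank_le hY (ha ▸ ha' ▸ h) (ha ▸ mRank_join_le_right a)
      (ha' ▸ mRank_join_le_left a')
  · exact hY.eq_of_apply_eq_of_mRank_le hX (ha ▸ ha' ▸ h) (ha ▸ mRank_join_le_left a)
      (ha' ▸ mRank_join_le_right a')
  · exact Y.injective (ha ▸ ha' ▸ h)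

theorem meet_bijective (hX : I.IsStable X) (hY : I.IsStable Y) : (I.meet X Y).Bijective :=
  Function.bijective_of_forall_pair_eq (J := Equiv.ofBijective _ (join_bijective hX hY))
    join_meet_pair

theorem isStable_of_forall_eq_join (hX : I.IsStable X) (hY : I.IsStable Y) {M : Fin n ≃ Fin n}
    (hM : ∀ a, M a = I.join X Y a) : I.IsStable M := by
  have hMor : ∀ a, M a = X a ∨ M a = Y a := fun a => hM a ▸ join_eq_or a
  refine isStable_iff.2 fun a b hab => ?_
  rcases Equiv.symm_apply_eq_or hMor b with hb | hb <;> rw [hb]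
  · exact isStable_iff.1 hX a b (hab.trans_le (hM a ▸ mRank_join_le_left a))
  · exact isStable_iff.1 hY a b (hab.trans_le (hM a ▸ mRank_join_le_right a))

theorem wRank_symm_le_of_forall_eq_meet (hY : I.IsStable Y) {M : Fin n ≃ Fin n}
    (hM : ∀ a, M a = I.meet X Y a) (b : Fin n) :
    I.wRank b (M.symm b) ≤ I.wRank b (X.symm b) := by
  have hMor : ∀ a, M a = X a ∨ M a = Y a := fun a => hM a ▸ meet_eq_or a
  set c := M.symm b
  set p := X.symm b
  rcases eq_or_ne p c with hpc | hpc
  · rw [hpc]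
  have hMc : M c = Y c := by
    refine (hMor c).resolve_left fun h => hpc ?_
    rw [X.symm_apply_eq, ← h, M.apply_symm_apply]
  have hXp : X p ≠ M p := by
    rw [X.apply_symm_apply, ← M.apply_symm_apply b]
    exact fun h => hpc (M.injective h).symm
  have hMp : M p = Y p := (hMor p).resolve_left hXp.symm
  have hlt : I.mRank p b < I.mRank p (Y p) := by
    rw [← hMp, ← X.apply_symm_apply b]
    exact mRank_lt_of_le_of_ne (hM p ▸ mRank_le_meet_left p) hXp
  have hYb : Y.symm b = c := by rw [Y.symm_apply_eq, ← hMc, M.apply_symm_apply]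
  exact hYb ▸ isStable_iff.1 hY p b hlt

theorem isStable_of_forall_eq_meet (hX : I.IsStable X) (hY : I.IsStable Y) {M : Fin n ≃ Fin n}
    (hM : ∀ a, M a = I.meet X Y a) : I.IsStable M := by
  refine isStable_iff.2 fun a b hab => ?_
  rw [hM] at hab
  rcases meet_eq_or a with ha | ha <;> rw [ha] at hab
  · exact (wRank_symm_le_of_forall_eq_meet hY hM b).trans (isStable_iff.1 hX a b hab)
  · exact (wRank_symm_le_of_forall_eq_meet hX (meet_comm (X := X) ▸ hM) b).trans
      (isStable_iff.1 hY a b hab)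

end SMInstance

theorem stable_matchings_lattice_ops {n : ℕ} (I : SMInstance n)
    (X Y : Fin n ≃ Fin n) (hX : I.IsStable X) (hY : I.IsStable Y) :
    (∃ J : Fin n ≃ Fin n,
      (∀ a : Fin n,
        J a = if I.mRank a (X a) ≤ I.mRank a (Y a) then X a else Y a) ∧
      I.IsStable J) ∧
    (∃ K : Fin n ≃ Fin n,
      (∀ a : Fin n,
        K a = if I.mRank a (X a) ≤ I.mRank a (Y a) then Y a else X a) ∧
      I.IsStable K) :=
  ⟨⟨Equiv.ofBijective _ (I.join_bijective hX hY), fun _ => rfl,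
      I.isStable_of_forall_eq_join hX hY fun _ => rfl⟩,
    ⟨Equiv.ofBijective _ (I.meet_bijective hX hY), fun _ => rfl,
      I.isStable_of_forall_eq_meet hX hY fun _ => rfl⟩⟩
end

section
/- Greedy exchange lemma for disjoint chains of solutions: Let L be a lattice of feasible solutions (r-tuples over disjoint chains, componentwise order) and suppose (X₁,…,X_k) is the sequence produced by iteratively taking the minimum solution, then the minimum among solutions disjoint from and above the current one, stopping when the current solution intersects the top element. Then k is the maximum possible length of a strictly increasing sequence of pairwise disjoint feasible solutions: for any chain Y₁ < Y₂ < … < Y_ℓ of pairwise disjoint feasible solutions, ℓ ≤ k. -/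
/-! Comparable disjoint solutions are strictly ordered in every coordinate, `X ≤ Y` and
`SolDisjoint X Y` giving `StrongLT X Y`. Hence the greedy solutions stay below any chain
`Y₀ < ⋯ < Y_{l-1}` of pairwise disjoint solutions, `X i ≤ Y j` for `i ≤ j`: inductively
`X i ≤ Y (j - 1) ≺ Y j`, so `Y j` is disjoint from and above `X i`, and `X (i + 1)` is the
least such solution. If `l > k` this gives `X (k - 1) ≤ Y (l - 2) ≺ Y (l - 1) ≤ Z`, so
`X (k - 1)` would be disjoint from the top `Z`. -/

/-- Two solutions are disjoint if they differ in every coordinate. -/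
def SolDisjoint {r : ℕ} {E : Fin r → Type*} (X Y : ∀ ℓ, E ℓ) : Prop :=
  ∀ ℓ : Fin r, X ℓ ≠ Y ℓ

section

variable {r : ℕ} {E : Fin r → Type*}

theorem SolDisjoint.strongLT_of_le [∀ ℓ, PartialOrder (E ℓ)] {X Y : ∀ ℓ, E ℓ}
    (hXY : SolDisjoint X Y) (hle : X ≤ Y) : StrongLT X Y :=
  fun ℓ => (hle ℓ).lt_of_ne (hXY ℓ)

theorem StrongLT.solDisjoint [∀ ℓ, Preorder (E ℓ)] {X Y : ∀ ℓ, E ℓ} (h : StrongLT X Y) :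
    SolDisjoint X Y :=
  fun ℓ => (h ℓ).ne

theorem greedy_le_of_strongLT_chain [∀ ℓ, Preorder (E ℓ)] {Γ : Set (∀ ℓ, E ℓ)} {k l : ℕ}
    {X Y : ℕ → ∀ ℓ, E ℓ} (hbot : ∀ Y ∈ Γ, X 0 ≤ Y)
    (hmin : ∀ i, i + 1 < k → ∀ Y ∈ Γ, SolDisjoint (X i) Y → X i ≤ Y → X (i + 1) ≤ Y)
    (hYΓ : ∀ m < l, Y m ∈ Γ) (hY : ∀ m, m + 1 < l → StrongLT (Y m) (Y (m + 1))) :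
    ∀ i < k, ∀ j, i ≤ j → j < l → X i ≤ Y j := by
  intro i
  induction i with
  | zero => exact fun _ j _ hj => hbot _ (hYΓ j hj)
  | succ i ih =>
    intro hik j hij hjl
    obtain ⟨j, rfl⟩ : ∃ j', j = j' + 1 := ⟨j - 1, by omega⟩
    have hlt : StrongLT (X i) (Y (j + 1)) :=
      (ih (by omega) j (by omega) (by omega)).trans_strongLT (hY j hjl)
    exact hmin i hik _ (hYΓ _ hjl) hlt.solDisjoint hlt.le

end

theorem greedy_disjoint_solutions_maximum_general {r : ℕ} {E : Fin r → Type*}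
    [∀ ℓ, LinearOrder (E ℓ)]
    (Γ : Set (∀ ℓ, E ℓ))
    (Z : ∀ ℓ, E ℓ) (htop : ∀ Y ∈ Γ, Y ≤ Z)
    (k : ℕ) (hk : 1 ≤ k) (X : ℕ → ∀ ℓ, E ℓ)
    (hbot : X 0 ∈ Γ ∧ ∀ Y ∈ Γ, X 0 ≤ Y)
    (hstep : ∀ i, i + 1 < k →
      X (i + 1) ∈ Γ ∧ SolDisjoint (X i) (X (i + 1)) ∧ X i ≤ X (i + 1) ∧
      ∀ Y ∈ Γ, SolDisjoint (X i) Y → X i ≤ Y → X (i + 1) ≤ Y)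
    (hstop : ¬ SolDisjoint (X (k - 1)) Z) :
    ∀ (l : ℕ) (Y : ℕ → ∀ ℓ, E ℓ),
      (∀ m, m < l → Y m ∈ Γ) →
      (∀ m m', m < m' → m' < l → Y m < Y m' ∧ SolDisjoint (Y m) (Y m')) →
      l ≤ k := by
  intro l Y hYΓ hchain
  by_contra! hkl
  have hY : ∀ m, m + 1 < l → StrongLT (Y m) (Y (m + 1)) := fun m hm =>
    let ⟨hlt, hdisj⟩ := hchain m (m + 1) m.lt_succ_self hm
    hdisj.strongLT_of_le hlt.le
  have hXY : X (k - 1) ≤ Y (l - 2) :=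
    greedy_le_of_strongLT_chain hbot.2 (fun i hi => (hstep i hi).2.2.2) hYΓ hY
      (k - 1) (by omega) (l - 2) (by omega) (by omega)
  have hXZ : StrongLT (X (k - 1)) Z :=
    (hXY.trans_strongLT (hY (l - 2) (by omega))).trans_le (htop _ (hYΓ _ (by omega)))
  exact hstop hXZ.solDisjoint

theorem greedy_disjoint_solutions_maximum {r : ℕ} {E : Fin r → Type*}
    [∀ ℓ, LinearOrder (E ℓ)]
    (Γ : Set (∀ ℓ, E ℓ))
    (hclosed : ∀ X ∈ Γ, ∀ Y ∈ Γ, X ⊓ Y ∈ Γ ∧ X ⊔ Y ∈ Γ)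
    (Z : ∀ ℓ, E ℓ) (hZ : Z ∈ Γ) (htop : ∀ Y ∈ Γ, Y ≤ Z)
    (k : ℕ) (hk : 1 ≤ k) (X : ℕ → ∀ ℓ, E ℓ)
    (hbot : X 0 ∈ Γ ∧ ∀ Y ∈ Γ, X 0 ≤ Y)
    (hstep : ∀ i, i + 1 < k →
      X (i + 1) ∈ Γ ∧ SolDisjoint (X i) (X (i + 1)) ∧ X i ≤ X (i + 1) ∧
      ∀ Y ∈ Γ, SolDisjoint (X i) Y → X i ≤ Y → X (i + 1) ≤ Y)
    (hcont : ∀ i, i + 1 < k → SolDisjoint (X i) Z)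
    (hstop : ¬ SolDisjoint (X (k - 1)) Z) :
    ∀ (l : ℕ) (Y : ℕ → ∀ ℓ, E ℓ),
      (∀ m, m < l → Y m ∈ Γ) →
      (∀ m m', m < m' → m' < l → Y m < Y m' ∧ SolDisjoint (Y m) (Y m')) →
      l ≤ k :=
  greedy_disjoint_solutions_maximum_general Γ Z htop k hk X hbot hstep hstop
end
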